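/- arXiv:2101.11403 — 3 statements merged into one kernel-verified Lean document; each statement's English description precedes it below -/
import Mathlib

section
/- Let κ : [0,∞) → ℝ be a continuous, non-positive, decreasing function, and let G solve the ODE G''(t) + κ(t)G(t) = 0 with G(0) = 0, G'(0) = 1. Then G(t) ≥ t for all t ≥ 0. -/
/-!
While `G ≥ 0` we have `G'' = -κ G ≥ 0`, so `G'` stays above `G' 0 = 1`; while `G' > 0`, `G`
stays above `G 0 = 0`. At the first time `c` with `G' c ≤ 0`, both facts hold on `[0, c]`,
so `G' c ≥ 1`, a contradiction. Hence `G' ≥ 1` everywhere and `G t - t` is nondecreasing.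
-/

open Set

lemma monotoneOn_of_hasDerivAt_nonneg {D : Set ℝ} (hD : Convex ℝ D) {f f' : ℝ → ℝ}
    (hf : ∀ x ∈ D, HasDerivAt f (f' x) x) (hf'₀ : ∀ x ∈ interior D, 0 ≤ f' x) :
    MonotoneOn f D :=
  monotoneOn_of_hasDerivWithinAt_nonneg hD (fun x hx ↦ (hf x hx).continuousAt.continuousWithinAt)
    (fun x hx ↦ (hf x (interior_subset hx)).hasDerivWithinAt) hf'₀

section SecondOrderLinear

variable {G G' q : ℝ → ℝ}

lemma monotoneOn_deriv_of_hasDerivAt_deriv_eq_mul {s : Set ℝ} {a : ℝ} (hs : Convex ℝ s)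
    (ha : IsLeast s a) (hG : ∀ t ∈ s, HasDerivAt G (G' t) t)
    (hG' : ∀ t ∈ s, HasDerivAt G' (q t * G t) t) (hq : ∀ t ∈ s, 0 ≤ q t) (hGa : 0 ≤ G a)
    (hG'_nonneg : ∀ t ∈ interior s, 0 ≤ G' t) :
    MonotoneOn G' s := by
  have hG_mono : MonotoneOn G s := monotoneOn_of_hasDerivAt_nonneg hs hG hG'_nonneg
  refine monotoneOn_of_hasDerivAt_nonneg hs hG' fun t ht ↦ ?_
  have hts := interior_subset ht
  exact mul_nonneg (hq t hts) (hGa.trans (hG_mono ha.1 hts (ha.2 hts)))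

lemma deriv_pos_of_hasDerivAt_deriv_eq_mul {a : ℝ} (hG : ∀ t ∈ Ici a, HasDerivAt G (G' t) t)
    (hG' : ∀ t ∈ Ici a, HasDerivAt G' (q t * G t) t) (hq : ∀ t ∈ Ici a, 0 ≤ q t)
    (hGa : 0 ≤ G a) (hG'a : 0 < G' a) :
    ∀ t ∈ Ici a, 0 < G' t := by
  by_contra! h
  have hK : IsClosed (Ici a ∩ G' ⁻¹' Iic 0) :=
    ContinuousOn.preimage_isClosed_of_isClosed
      (fun t ht ↦ (hG' t ht).continuousAt.continuousWithinAt) isClosed_Ici isClosed_Iic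
  obtain ⟨⟨hac, hG'c⟩, hc_least⟩ := hK.isLeast_csInf h ⟨a, fun t ht ↦ ht.1⟩
  set c := sInf (Ici a ∩ G' ⁻¹' Iic 0)
  have hG'_mono : MonotoneOn G' (Icc a c) := by
    refine monotoneOn_deriv_of_hasDerivAt_deriv_eq_mul (convex_Icc a c) (isLeast_Icc hac)
      (fun t ht ↦ hG t ht.1) (fun t ht ↦ hG' t ht.1) (fun t ht ↦ hq t ht.1) hGa fun t ht ↦ ?_
    rw [interior_Icc] at ht
    by_contra! hneg
    exact (hc_least ⟨ht.1.le, hneg.le⟩).not_gt ht.2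
  have hG'ac := hG'_mono (left_mem_Icc.2 hac) (right_mem_Icc.2 hac) hac
  exact (hG'a.trans_le hG'ac).not_ge hG'c

end SecondOrderLinear

theorem ode_comparison_G_ge_t_general
    (κ G G' : ℝ → ℝ)
    (hκnonpos : ∀ t ∈ Ici (0:ℝ), κ t ≤ 0)
    (hG : ∀ t ∈ Ici (0:ℝ), HasDerivAt G (G' t) t)
    (hG' : ∀ t ∈ Ici (0:ℝ), HasDerivAt G' (-(κ t) * G t) t)
    (hG0 : G 0 = 0) (hG'0 : G' 0 = 1) :
    ∀ t ∈ Ici (0:ℝ), t ≤ G t := by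
  have hq : ∀ t ∈ Ici (0:ℝ), 0 ≤ -κ t := fun t ht ↦ neg_nonneg.2 (hκnonpos t ht)
  have hG'_pos :=
    deriv_pos_of_hasDerivAt_deriv_eq_mul hG hG' hq hG0.ge (by rw [hG'0]; exact one_pos)
  have hG'_mono : MonotoneOn G' (Ici 0) :=
    monotoneOn_deriv_of_hasDerivAt_deriv_eq_mul (convex_Ici 0) isLeast_Ici hG hG' hq hG0.ge
      fun t ht ↦ (hG'_pos t (interior_subset ht)).le
  have hG_sub_mono : MonotoneOn (fun t ↦ G t - t) (Ici 0) := by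
    refine monotoneOn_of_hasDerivAt_nonneg (convex_Ici 0)
      (fun t ht ↦ (hG t ht).sub (hasDerivAt_id t)) fun t ht ↦ ?_
    have := hG'_mono self_mem_Ici (interior_subset ht) (interior_subset ht)
    linarith
  intro t ht
  have := hG_sub_mono self_mem_Ici ht ht
  simp only [hG0, sub_zero, sub_nonneg] at this
  exact this

/-- If `κ : [0,∞) → ℝ` is continuous, non-positive and decreasing, and `G` solves
`G'' + κ G = 0` with `G 0 = 0`, `G' 0 = 1`, then `G t ≥ t` for all `t ≥ 0`. -/
theorem ode_comparison_G_ge_t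
    (κ G G' : ℝ → ℝ)
    (hκcont : ContinuousOn κ (Ici 0))
    (hκnonpos : ∀ t ∈ Ici (0:ℝ), κ t ≤ 0)
    (hκanti : AntitoneOn κ (Ici 0))
    (hG : ∀ t ∈ Ici (0:ℝ), HasDerivAt G (G' t) t)
    (hG' : ∀ t ∈ Ici (0:ℝ), HasDerivAt G' (-(κ t) * G t) t)
    (hG0 : G 0 = 0) (hG'0 : G' 0 = 1) :
    ∀ t ∈ Ici (0:ℝ), t ≤ G t :=
  ode_comparison_G_ge_t_general κ G G' hκnonpos hG hG' hG0 hG'0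
end

section
/- Let κ : [0,∞) → ℝ be a continuous, non-positive, decreasing function, and let G solve G''(t) + κ(t)G(t) = 0 with G(0) = 0, G'(0) = 1. Then G(r) ≤ r·exp(r·√(-κ(r))) for all r ≥ 0. -/
/-!
Put `K = √(-κ r)`. On `[0, r]` monotonicity gives `|κ| ≤ K²`, so the vector `(K G, G')` satisfies
`‖(K G, G')'‖ ≤ K ‖(K G, G')‖` in the sup norm, and Gronwall bounds it by `exp (K t)`. In particular
`|G'| ≤ exp (K r)` on `[0, r]`, and the mean value theorem gives `G r ≤ r exp (K r)`.
-/

open Set Real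

section LinearSecondOrder

variable {q y y' : ℝ → ℝ} {K a b : ℝ}

theorem norm_prod_mul_le_mul_norm (hK : 0 ≤ K) {c : ℝ} (hc : |c| ≤ K ^ 2) (u v : ℝ) :
    ‖(K * v, c * u)‖ ≤ K * ‖(K * u, v)‖ := by
  simp only [Prod.norm_def, Real.norm_eq_abs, abs_mul, abs_of_nonneg hK]
  refine max_le (mul_le_mul_of_nonneg_left (le_max_right _ _) hK) ?_
  calc |c| * |u| ≤ K ^ 2 * |u| := mul_le_mul_of_nonneg_right hc (abs_nonneg u)
    _ = K * (K * |u|) := by ring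
    _ ≤ K * max (K * |u|) |v| := mul_le_mul_of_nonneg_left (le_max_left _ _) hK

theorem norm_prod_le_exp_of_hasDerivAt_mul
    (hK : 0 ≤ K) (hq : ∀ t ∈ Icc a b, |q t| ≤ K ^ 2)
    (hy : ∀ t ∈ Icc a b, HasDerivAt y (y' t) t)
    (hy' : ∀ t ∈ Icc a b, HasDerivAt y' (q t * y t) t) :
    ∀ t ∈ Icc a b, ‖(K * y t, y' t)‖ ≤ ‖(K * y a, y' a)‖ * exp (K * (t - a)) := by
  have hderiv : ∀ t ∈ Icc a b,
      HasDerivAt (fun s => (K * y s, y' s)) (K * y' t, q t * y t) t :=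
    fun t ht => ((hy t ht).const_mul K).prodMk (hy' t ht)
  intro t ht
  simpa only [gronwallBound_ε0] using
    norm_le_gronwallBound_of_norm_deriv_right_le (ε := 0)
      (fun s hs => (hderiv s hs).continuousAt.continuousWithinAt)
      (fun s hs => (hderiv s (Ico_subset_Icc_self hs)).hasDerivWithinAt) le_rfl
      (fun s hs => by
        simpa using norm_prod_mul_le_mul_norm hK (hq s (Ico_subset_Icc_self hs)) (y s) (y' s))
      t ht

theorem abs_sub_le_exp_of_hasDerivAt_mul (hab : a ≤ b)
    (hK : 0 ≤ K) (hq : ∀ t ∈ Icc a b, |q t| ≤ K ^ 2)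
    (hy : ∀ t ∈ Icc a b, HasDerivAt y (y' t) t)
    (hy' : ∀ t ∈ Icc a b, HasDerivAt y' (q t * y t) t) :
    |y b - y a| ≤ ‖(K * y a, y' a)‖ * exp (K * (b - a)) * (b - a) := by
  have hy'_le : ∀ t ∈ Icc a b, ‖y' t‖ ≤ ‖(K * y a, y' a)‖ * exp (K * (b - a)) := by
    intro t ht
    calc ‖y' t‖ ≤ ‖(K * y t, y' t)‖ := norm_snd_le (K * y t, y' t)
      _ ≤ ‖(K * y a, y' a)‖ * exp (K * (t - a)) :=
        norm_prod_le_exp_of_hasDerivAt_mul hK hq hy hy' t ht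
      _ ≤ ‖(K * y a, y' a)‖ * exp (K * (b - a)) := by
        gcongr
        exact ht.2
  simpa [abs_of_nonneg (sub_nonneg.2 hab)] using
    (convex_Icc a b).norm_image_sub_le_of_norm_hasDerivWithin_le
      (fun t ht => (hy t ht).hasDerivWithinAt) hy'_le (left_mem_Icc.2 hab) (right_mem_Icc.2 hab)

end LinearSecondOrder

theorem ode_upper_bound_G_general
    (κ G G' : ℝ → ℝ)
    (hκnonpos : ∀ t ∈ Ici (0:ℝ), κ t ≤ 0)
    (hκanti : AntitoneOn κ (Ici 0))
    (hG : ∀ t ∈ Ici (0:ℝ), HasDerivAt G (G' t) t)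
    (hG' : ∀ t ∈ Ici (0:ℝ), HasDerivAt G' (-(κ t) * G t) t)
    (hG0 : G 0 = 0) (hG'0 : G' 0 = 1) :
    ∀ r ∈ Ici (0:ℝ), G r ≤ r * Real.exp (r * Real.sqrt (-κ r)) := by
  intro r hr
  have hκ_le : ∀ t ∈ Icc 0 r, |-κ t| ≤ √(-κ r) ^ 2 := by
    intro t ht
    rw [sq_sqrt (neg_nonneg.2 (hκnonpos r hr)), abs_of_nonneg (neg_nonneg.2 (hκnonpos t ht.1))]
    exact neg_le_neg (hκanti ht.1 hr ht.2)
  have h := abs_sub_le_exp_of_hasDerivAt_mul (q := fun t => -κ t) hr (sqrt_nonneg _) hκ_le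
    (fun t ht => hG t ht.1) (fun t ht => hG' t ht.1)
  simp only [hG0, hG'0, mul_zero, sub_zero, Prod.norm_def, norm_zero, norm_one,
    max_eq_right zero_le_one, one_mul] at h
  calc G r ≤ |G r| := le_abs_self _
    _ ≤ exp (√(-κ r) * r) * r := h
    _ = r * exp (r * √(-κ r)) := by rw [mul_comm, mul_comm √(-κ r)]

/-- If `κ : [0,∞) → ℝ` is continuous, non-positive and decreasing, and `G` solves
`G'' + κ G = 0` with `G 0 = 0`, `G' 0 = 1`, then `G r ≤ r·exp(r·√(-κ r))` for `r ≥ 0`. -/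
theorem ode_upper_bound_G
    (κ G G' : ℝ → ℝ)
    (hκcont : ContinuousOn κ (Ici 0))
    (hκnonpos : ∀ t ∈ Ici (0:ℝ), κ t ≤ 0)
    (hκanti : AntitoneOn κ (Ici 0))
    (hG : ∀ t ∈ Ici (0:ℝ), HasDerivAt G (G' t) t)
    (hG' : ∀ t ∈ Ici (0:ℝ), HasDerivAt G' (-(κ t) * G t) t)
    (hG0 : G 0 = 0) (hG'0 : G' 0 = 1) :
    ∀ r ∈ Ici (0:ℝ), G r ≤ r * Real.exp (r * Real.sqrt (-κ r)) :=
  ode_upper_bound_G_general κ G G' hκnonpos hκanti hG hG' hG0 hG'0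
end

section
/- Let T : (0,∞) → ℝ be a strictly positive, nondecreasing C¹ function, let γ > 0 satisfy T(γ) ≥ e, and let φ : [e,∞) → (0,∞) be nondecreasing with c_φ := ∫_e^∞ dt/(t·φ(t)) < ∞. Then the set of r ≥ γ for which T'(r) > T(r)·φ(T(r)) has Lebesgue measure at most c_φ. -/
/-!
Put `f t = 1 / (t φ t)` and `G r = ∫_e^{T r} f`, frozen for `r ≤ γ`. Then `G` is nondecreasing
and increases by at most `c_φ` in total, so its Stieltjes measure has mass at most `c_φ`; since
`G'` is almost everywhere the density of that measure against Lebesgue measure, the set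
`{G' ≥ 1}` has Lebesgue measure at most `c_φ`. Because `f` is nonincreasing,
`G r - G y ≥ (T r - T y) f (T r)` for `γ < y < r`, whence `G' r ≥ T' r / (T r φ (T r))`, which
exceeds `1` on the exceptional set.
-/

open Set Real MeasureTheory Filter Topology

theorem antitoneOn_one_div_mul_self {φ : ℝ → ℝ} {a : ℝ} (ha : 0 < a)
    (hφpos : ∀ t ∈ Ici a, 0 < φ t) (hφ : MonotoneOn φ (Ici a)) :
    AntitoneOn (fun t => 1 / (t * φ t)) (Ici a) := fun s hs _ ht hst =>
  one_div_le_one_div_of_le (mul_pos (ha.trans_le hs) (hφpos s hs))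
    (mul_le_mul hst (hφ hs ht hst) (hφpos s hs).le (ha.trans_le (le_trans hs hst)).le)

theorem AntitoneOn.sub_mul_le_intervalIntegral {f : ℝ → ℝ} {a b : ℝ}
    (hf : AntitoneOn f (Icc a b)) (hab : a ≤ b) : (b - a) * f b ≤ ∫ x in a..b, f x := by
  have h := intervalIntegral.integral_mono_on hab (intervalIntegrable_const (μ := volume))
    (AntitoneOn.intervalIntegrable (by rwa [uIcc_of_le hab]))
    fun x hx => hf hx (right_mem_Icc.2 hab) hx.2
  rwa [intervalIntegral.integral_const, smul_eq_mul] at h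

theorem AntitoneOn.sub_mul_le_intervalIntegral_sub {f : ℝ → ℝ} {a u v : ℝ}
    (hf : AntitoneOn f (Ici a)) (hau : a ≤ u) (huv : u ≤ v) :
    (v - u) * f v ≤ (∫ x in a..v, f x) - ∫ x in a..u, f x := by
  have hint : ∀ w, a ≤ w → IntervalIntegrable f volume a w := fun w hw =>
    (hf.mono fun x hx => by rw [uIcc_of_le hw] at hx; exact hx.1).intervalIntegrable
  rw [intervalIntegral.integral_interval_sub_left (hint v (hau.trans huv)) (hint u hau)]
  exact (hf.mono fun x hx => hau.trans hx.1).sub_mul_le_intervalIntegral huv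

theorem monotoneOn_intervalIntegral_of_nonneg {f : ℝ → ℝ} {a : ℝ}
    (hf : IntegrableOn f (Ici a)) (hf0 : ∀ x ∈ Ici a, 0 ≤ f x) :
    MonotoneOn (fun t => ∫ x in a..t, f x) (Ici a) :=
  fun u hu v hv huv => intervalIntegral.integral_mono_interval le_rfl hu huv
    (ae_restrict_of_forall_mem measurableSet_Ioc fun x hx => hf0 x hx.1.le)
    (hf.mono_set fun x hx => by rw [uIcc_of_le hv] at hx; exact hx.1).intervalIntegrable

theorem intervalIntegral_le_integral_Ici {f : ℝ → ℝ} {a t : ℝ} (hf : IntegrableOn f (Ici a))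
    (hf0 : ∀ x ∈ Ici a, 0 ≤ f x) (ht : a ≤ t) :
    ∫ x in a..t, f x ≤ ∫ x in Ici a, f x := by
  rw [intervalIntegral.integral_of_le ht]
  exact setIntegral_mono_set hf (ae_restrict_of_forall_mem measurableSet_Ici hf0)
    (Ioc_subset_Icc_self.trans Icc_subset_Ici_self).eventuallyLE

theorem MonotoneOn.monotone_comp_max {f : ℝ → ℝ} {a : ℝ} (hf : MonotoneOn f (Ici a)) :
    Monotone fun x => f (max x a) :=
  fun _ _ hxy => hf (le_max_right _ a) (le_max_right _ a) (max_le_max_right a hxy)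

theorem le_of_hasDerivAt_of_eventually_sub_le {f g : ℝ → ℝ} {f' g' x : ℝ}
    (hf : HasDerivAt f f' x) (hg : HasDerivAt g g' x)
    (h : ∀ᶠ y in 𝓝[<] x, g x - g y ≤ f x - f y) : g' ≤ f' := by
  have hslope : ∀ᶠ y in 𝓝[<] x, slope g x y ≤ slope f x y := by
    filter_upwards [h, self_mem_nhdsWithin] with y hy (hyx : y < x)
    rw [slope_comm g, slope_comm f, slope_def_field, slope_def_field]
    exact div_le_div_of_nonneg_right hy (sub_nonneg.2 hyx.le)
  have hleft : 𝓝[<] x ≤ 𝓝[≠] x := nhdsWithin_mono x fun y (hy : y < x) => hy.ne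
  exact le_of_tendsto_of_tendsto (hg.tendsto_slope.mono_left hleft)
    (hf.tendsto_slope.mono_left hleft) hslope

-- Only left difference quotients are compared, so that the bound involves `f (τ r)` itself and
-- not a one-sided limit of `f`, which need not be continuous.
theorem AntitoneOn.mul_le_deriv_intervalIntegral_comp_max {f τ : ℝ → ℝ} {a γ r τ' : ℝ}
    (hf : AntitoneOn f (Ici a)) (hτ : MonotoneOn τ (Ici γ)) (hτγ : a ≤ τ γ) (hγr : γ < r)
    (hτr : HasDerivAt τ τ' r)
    (hG : DifferentiableAt ℝ (fun y => ∫ x in a..τ (max y γ), f x) r) :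
    f (τ r) * τ' ≤ deriv (fun y => ∫ x in a..τ (max y γ), f x) r := by
  refine le_of_hasDerivAt_of_eventually_sub_le hG.hasDerivAt (hτr.const_mul (f (τ r))) ?_
  filter_upwards [Ioo_mem_nhdsLT hγr] with y hy
  simp only [max_eq_left hy.1.le, max_eq_left hγr.le]
  rw [← mul_sub, mul_comm]
  exact hf.sub_mul_le_intervalIntegral_sub (hτγ.trans (hτ self_mem_Ici hy.1.le hy.1.le))
    (hτ hy.1.le hγr.le hy.2.le)

theorem Monotone.stieltjesFunction_measure_univ_le {G : ℝ → ℝ} (hG : Monotone G) {m M : ℝ}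
    (hGm : ∀ x, G x ∈ Icc m M) :
    hG.stieltjesFunction.measure univ ≤ ENNReal.ofReal (M - m) := by
  have hbot : BddBelow (range G) := ⟨m, by rintro _ ⟨x, rfl⟩; exact (hGm x).1⟩
  have htop : BddAbove (range G) := ⟨M, by rintro _ ⟨x, rfl⟩; exact (hGm x).2⟩
  rw [StieltjesFunction.measure_univ _
    (tendsto_rightLim_atBot_of_tendsto (tendsto_atBot_ciInf hG hbot))
    (tendsto_rightLim_atTop_of_tendsto (tendsto_atTop_ciSup hG htop))]
  exact ENNReal.ofReal_le_ofReal
    (sub_le_sub (ciSup_le fun x => (hGm x).2) (le_ciInf fun x => (hGm x).1))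

theorem Monotone.volume_le_of_one_le_deriv {G : ℝ → ℝ} (hG : Monotone G) {m M : ℝ}
    (hGm : ∀ x, G x ∈ Icc m M) {s : Set ℝ} (hs : ∀ᵐ x, x ∈ s → 1 ≤ deriv G x) :
    volume s ≤ ENNReal.ofReal (M - m) := by
  set μ := hG.stieltjesFunction.measure
  set S := {x | 1 ≤ μ.rnDeriv volume x}
  have hsS : s ≤ᵐ[volume] S := by
    filter_upwards [hs, hG.ae_hasDerivAt] with x hx hder hxs
    change 1 ≤ μ.rnDeriv volume x
    rw [← ENNReal.ofReal_one]
    exact ENNReal.ofReal_le_of_le_toReal (hder.deriv ▸ hx hxs)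
  have hS : MeasurableSet S := measurableSet_le measurable_const (Measure.measurable_rnDeriv _ _)
  calc volume s ≤ volume S := measure_mono_ae hsS
    _ = ∫⁻ _ in S, 1 := (setLIntegral_one S).symm
    _ ≤ ∫⁻ x in S, μ.rnDeriv volume x := setLIntegral_mono' hS fun x hx => hx
    _ ≤ μ S := Measure.setLIntegral_rnDeriv_le S
    _ ≤ μ univ := measure_mono (subset_univ S)
    _ ≤ ENNReal.ofReal (M - m) := hG.stieltjesFunction_measure_univ_le hGm

theorem borel_growth_lemma_general
    (T T' φ : ℝ → ℝ) (γ : ℝ)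
    (hT : ∀ r ∈ Ioi (0:ℝ), HasDerivAt T (T' r) r)
    (hTmono : MonotoneOn T (Ioi 0))
    (hγ : 0 < γ) (hTγ : Real.exp 1 ≤ T γ)
    (hφpos : ∀ t ∈ Ici (Real.exp 1), 0 < φ t)
    (hφmono : MonotoneOn φ (Ici (Real.exp 1)))
    (hφint : IntegrableOn (fun t => 1 / (t * φ t)) (Ici (Real.exp 1))) :
    volume {r : ℝ | γ ≤ r ∧ T r * φ (T r) < T' r}
      ≤ ENNReal.ofReal (∫ t in Ici (Real.exp 1), 1 / (t * φ t)) := by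
  set e := exp 1
  set f : ℝ → ℝ := fun t => 1 / (t * φ t)
  have hf : AntitoneOn f (Ici e) := antitoneOn_one_div_mul_self (exp_pos 1) hφpos hφmono
  have hf0 : ∀ t ∈ Ici e, 0 ≤ f t := fun t ht =>
    (one_div_pos.2 (mul_pos ((exp_pos 1).trans_le ht) (hφpos t ht))).le
  have hTγmono : MonotoneOn T (Ici γ) := hTmono.mono fun r hr => hγ.trans_le hr
  have hTe : ∀ r, γ ≤ r → e ≤ T r := fun r hr => hTγ.trans (hTγmono self_mem_Ici hr hr)
  set G : ℝ → ℝ := fun r => ∫ t in e..T (max r γ), f t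
  have hG : Monotone G := fun r s hrs =>
    monotoneOn_intervalIntegral_of_nonneg hφint hf0 (hTe _ (le_max_right r γ))
      (hTe _ (le_max_right s γ)) (hTγmono.monotone_comp_max hrs)
  have hGm : ∀ r, G r ∈ Icc 0 (∫ t in Ici e, f t) := fun r =>
    have her := hTe _ (le_max_right r γ)
    ⟨intervalIntegral.integral_nonneg her fun t ht => hf0 t ht.1,
      intervalIntegral_le_integral_Ici hφint hf0 her⟩
  refine sub_zero (∫ t in Ici e, f t) ▸ hG.volume_le_of_one_le_deriv hGm ?_
  filter_upwards [hG.ae_differentiableAt, (countable_singleton γ).ae_notMem volume]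
    with r hGr hrγ ⟨hγr, hr⟩
  have hγr' : γ < r := lt_of_le_of_ne hγr (Ne.symm hrγ)
  have hTφ : 0 < T r * φ (T r) :=
    mul_pos ((exp_pos 1).trans_le (hTe r hγr)) (hφpos _ (hTe r hγr))
  calc 1 ≤ f (T r) * T' r := by rw [one_div_mul_eq_div, one_le_div hTφ]; exact hr.le
    _ ≤ deriv G r :=
        hf.mul_le_deriv_intervalIntegral_comp_max hTγmono hTγ hγr' (hT r (hγ.trans hγr')) hGr

/-- Borel growth lemma: if `T` is positive, nondecreasing and `C¹` on `(0,∞)`,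
`T γ ≥ e` for some `γ > 0`, and `φ` is positive nondecreasing on `[e,∞)` with
`c_φ = ∫_e^∞ dt/(t φ t) < ∞`, then the set of `r ≥ γ` where `T' r > T r · φ (T r)`
has Lebesgue measure at most `c_φ`. -/
theorem borel_growth_lemma
    (T T' φ : ℝ → ℝ) (γ : ℝ)
    (hT : ∀ r ∈ Ioi (0:ℝ), HasDerivAt T (T' r) r)
    (hT'cont : ContinuousOn T' (Ioi 0))
    (hTpos : ∀ r ∈ Ioi (0:ℝ), 0 < T r)
    (hTmono : MonotoneOn T (Ioi 0))
    (hγ : 0 < γ) (hTγ : Real.exp 1 ≤ T γ)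
    (hφpos : ∀ t ∈ Ici (Real.exp 1), 0 < φ t)
    (hφmono : MonotoneOn φ (Ici (Real.exp 1)))
    (hφint : IntegrableOn (fun t => 1 / (t * φ t)) (Ici (Real.exp 1))) :
    volume {r : ℝ | γ ≤ r ∧ T r * φ (T r) < T' r}
      ≤ ENNReal.ofReal (∫ t in Ici (Real.exp 1), 1 / (t * φ t)) :=
  borel_growth_lemma_general T T' φ γ hT hTmono hγ hTγ hφpos hφmono hφint
end
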